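/- arXiv:2101.10902 — 2 statements merged into one kernel-verified Lean document; each statement's English description precedes it below -/
import Mathlib

section
/- The 2-times coverage function is not submodular in general: there exist a finite element set X with nonnegative weights, a finite overlay set A with coverage counts in {0,1}, subsets O ⊆ O' ⊆ A, and an overlay a ∉ O', such that f_2(O ∪ {a}) − f_2(O) < f_2(O' ∪ {a}) − f_2(O'). -/
/-- The 2-times coverage function is not submodular in general. -/
theorem two_times_coverage_not_submodular :
    ∃ (l m : ℕ) (w : Fin l → ℝ) (c : Fin m → Fin l → ℕ)
      (O O' : Finset (Fin m)) (a : Fin m),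
      (∀ x, 0 ≤ w x) ∧ (∀ j x, c j x ≤ 1) ∧ O ⊆ O' ∧ a ∉ O' ∧
      (∑ x : Fin l, if 2 ≤ ∑ j ∈ insert a O, c j x then w x else 0) -
          (∑ x : Fin l, if 2 ≤ ∑ j ∈ O, c j x then w x else 0) <
        (∑ x : Fin l, if 2 ≤ ∑ j ∈ insert a O', c j x then w x else 0) -
          (∑ x : Fin l, if 2 ≤ ∑ j ∈ O', c j x then w x else 0) := by
  refine ⟨4, 3, ![0.01, 0.01, 0.5, 0.48],
    ![![0,1,0,1], ![0,0,1,1], ![1,1,0,0]], {2}, {1, 2}, 0, ?_, ?_, ?_, ?_, ?_⟩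
  · intro x; fin_cases x <;> norm_num
  · intro j x; fin_cases j <;> fin_cases x <;> norm_num
  · decide
  · decide
  · simp [Fin.sum_univ_succ, Finset.sum_insert]
    norm_num
end

section
/- For every integer n > 1, the n-times coverage function is not submodular: there exist finite X, weights w, overlays with counts c_j, subsets O ⊆ O' and overlay a ∉ O' such that f_n(O ∪ {a}) − f_n(O) < f_n(O' ∪ {a}) − f_n(O'). -/
/-- For every n > 1, the n-times coverage function is not submodular. -/
theorem ntimes_coverage_not_submodular (n : ℕ) (hn : 1 < n) :
    ∃ (l m : ℕ) (w : Fin l → ℝ) (c : Fin m → Fin l → ℕ)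
      (O O' : Finset (Fin m)) (a : Fin m),
      (∀ x, 0 ≤ w x) ∧ O ⊆ O' ∧ a ∉ O' ∧
      (∑ x : Fin l, if n ≤ ∑ j ∈ insert a O, c j x then w x else 0) -
          (∑ x : Fin l, if n ≤ ∑ j ∈ O, c j x then w x else 0) <
        (∑ x : Fin l, if n ≤ ∑ j ∈ insert a O', c j x then w x else 0) -
          (∑ x : Fin l, if n ≤ ∑ j ∈ O', c j x then w x else 0) := by
  refine ⟨1, 2, fun _ => 1, fun j _ => if j = 0 then n - 1 else 1,
    ∅, {0}, 1, fun _ => zero_le_one, by simp, by decide, ?_⟩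
  have h1 : ¬ n ≤ 1 := by omega
  have h2 : ¬ n ≤ n - 1 := by omega
  have h3 : n ≤ n - 1 + 1 := by omega
  have h4 : n ≤ 1 + (n - 1) := by omega
  have h5 : n ≠ 0 := by omega
  simp [Finset.sum_insert, h1, h2, h3, h4, h5]
end
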